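/- arXiv:1403.5159 — 4 statements merged into one kernel-verified Lean document; each statement's English description precedes it below -/
import Mathlib

section
/- For every s ∈ J there exist positive constants C and δ such that for all t ∈ J with |s − t| < δ one has Y(s) Δ Y(t) ⊆ { y ∈ int K : dist(y, Λ(s)) < C |s − t| }, where Δ denotes the symmetric difference of sets and dist(y, Λ(s)) is the Euclidean distance from y to the set Λ(s). -/
open Set

open Metric

namespace PerfThin
variable {d : ℕ} {F : ℝ → EuclideanSpace ℝ (Fin d) → ℝ}

noncomputable def Dy (F : ℝ → EuclideanSpace ℝ (Fin d) → ℝ) (t : ℝ)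
    (y : EuclideanSpace ℝ (Fin d)) : EuclideanSpace ℝ (Fin d) →L[ℝ] ℝ :=
  (fderiv ℝ (fun z : ℝ × EuclideanSpace ℝ (Fin d) => F z.1 z.2) (t, y)).comp
    (ContinuousLinearMap.inr ℝ ℝ (EuclideanSpace ℝ (Fin d)))

theorem hasFDerivAt_snd (hF : ContDiff ℝ 1 (fun z : ℝ × EuclideanSpace ℝ (Fin d) => F z.1 z.2))
    (t : ℝ) (y : EuclideanSpace ℝ (Fin d)) :
    HasFDerivAt (F t) (Dy F t y) y :=
  ((hF.differentiable one_ne_zero (t, y)).hasFDerivAt.comp y (hasFDerivAt_prodMk_right t y))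

theorem continuous_Dy (hF : ContDiff ℝ 1 (fun z : ℝ × EuclideanSpace ℝ (Fin d) => F z.1 z.2))
    (s : ℝ) : Continuous fun y => Dy F s y :=
  Continuous.clm_comp ((hF.continuous_fderiv one_ne_zero).comp (Continuous.prodMk_right s)) continuous_const

theorem local_est (hF : ContDiff ℝ 1 (fun z : ℝ × EuclideanSpace ℝ (Fin d) => F z.1 z.2))
    (s : ℝ) (O : Set (EuclideanSpace ℝ (Fin d))) (hO : IsOpen O)
    (y₀ : EuclideanSpace ℝ (Fin d)) (hy₀O : y₀ ∈ O)
    (hy₀D : Dy F s y₀ ≠ 0) :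
    ∃ r > 0, ∃ c > 0, ∀ y ∈ ball y₀ r, |F s y| ≤ r / c →
      ∃ z, z ∈ O ∧ F s z = 0 ∧ dist y z ≤ c * |F s y| := by
  have hFscont : Continuous (F s) := hF.continuous.comp (Continuous.prodMk_right s)
  set m := ‖Dy F s y₀‖ with hm_def
  have hm : 0 < m := norm_pos_iff.2 hy₀D
  -- pick a good direction v
  obtain ⟨u, hu1, hu2⟩ := (Dy F s y₀).exists_lt_apply_of_lt_opNorm (show m / 2 < m by linarith)
  obtain ⟨v, hv1, hv2⟩ : ∃ v : EuclideanSpace ℝ (Fin d), ‖v‖ ≤ 1 ∧ m / 2 < Dy F s y₀ v := by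
    rcases le_or_gt 0 (Dy F s y₀ u) with h | h
    · exact ⟨u, hu1.le, by rwa [Real.norm_eq_abs, abs_of_nonneg h] at hu2⟩
    · refine ⟨-u, by simpa using hu1.le, ?_⟩
      rw [map_neg]
      rw [Real.norm_eq_abs, abs_of_neg h] at hu2
      linarith
  -- neighbourhood where the directional derivative stays large, inside O
  have hA : IsOpen {z : EuclideanSpace ℝ (Fin d) | m / 2 < Dy F s z v} :=
    isOpen_lt continuous_const ((continuous_Dy hF s).clm_apply continuous_const)
  have hmem : y₀ ∈ {z : EuclideanSpace ℝ (Fin d) | m / 2 < Dy F s z v} ∩ O := ⟨hv2, hy₀O⟩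
  obtain ⟨r₂, hr₂, hball⟩ := Metric.isOpen_iff.1 (hA.inter hO) y₀ hmem
  refine ⟨r₂ / 2, by linarith, 4 / m, by positivity, ?_⟩
  set r := r₂ / 2 with hr_def
  intro y hy hsmall
  have hsmall' : |F s y| ≤ m * r / 4 := by
    have : r / (4 / m) = m * r / 4 := by field_simp
    rw [← this]; exact hsmall
  -- points reached from y stay in the good set
  have hseg : ∀ w : EuclideanSpace ℝ (Fin d), ‖w‖ ≤ 1 → ∀ τ ∈ Icc (0:ℝ) r,
      y + τ • w ∈ {z : EuclideanSpace ℝ (Fin d) | m / 2 < Dy F s z v} ∩ O := by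
    intro w hw τ hτ
    apply hball
    have h1 : dist (y + τ • w) y ≤ τ := by
      rw [dist_eq_norm, add_sub_cancel_left, norm_smul, Real.norm_eq_abs, abs_of_nonneg hτ.1]
      calc τ * ‖w‖ ≤ τ * 1 := by nlinarith [hτ.1]
        _ = τ := mul_one τ
    have h2 : dist (y + τ • w) y₀ < r₂ := by
      calc dist (y + τ • w) y₀ ≤ dist (y + τ • w) y + dist y y₀ := dist_triangle _ _ _
        _ < τ + r := by have := mem_ball.1 hy; linarith
        _ ≤ r + r := by linarith [hτ.2]
        _ = r₂ := by rw [hr_def]; ring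
    exact mem_ball.2 h2
  have hyO : y ∈ O := by
    have := hseg v hv1 0 ⟨le_rfl, by linarith⟩
    simpa using this.2
  rcases lt_trichotomy (F s y) 0 with hFy | hFy | hFy
  · -- F s y < 0 : move in direction +v, F increases
    set g : ℝ → ℝ := fun τ => F s (y + τ • v) with hg_def
    have hgd : ∀ τ : ℝ, HasDerivAt g (Dy F s (y + τ • v) v) τ := by
      intro τ
      have hline : HasDerivAt (fun τ : ℝ => y + τ • v) v τ := by
        simpa using ((hasDerivAt_id τ).smul_const v).const_add y
      exact (hasFDerivAt_snd hF s (y + τ • v)).comp_hasDerivAt τ hline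
    set τ₁ := 4 * (-F s y) / m with hτ₁_def
    have hτ₁pos : 0 < τ₁ := div_pos (by linarith) hm
    have hτ₁r : τ₁ ≤ r := by
      rw [hτ₁_def]
      rw [abs_of_neg hFy] at hsmall'
      rw [div_le_iff₀ hm]; nlinarith
    have hmono := Convex.mul_sub_le_image_sub_of_le_deriv (convex_Icc 0 τ₁)
      (Continuous.continuousOn (by fun_prop : Continuous g))
      (fun τ _ => (hgd τ).differentiableAt.differentiableWithinAt)
      (C := m / 2) (f := g) ?_ 0 ⟨le_rfl, hτ₁pos.le⟩ τ₁ ⟨hτ₁pos.le, le_rfl⟩ hτ₁pos.le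
    · have hg0 : g 0 = F s y := by simp [hg_def]
      have hid : m / 2 * (τ₁ - 0) = -2 * F s y := by
        rw [hτ₁_def]; field_simp; ring
      have hgτ₁ : 0 < g τ₁ := by
        rw [hg0, hid] at hmono; linarith
      -- IVT
      have hivt := intermediate_value_Icc (le_of_lt hτ₁pos)
        (Continuous.continuousOn (by fun_prop : Continuous g))
      have h0mem : (0:ℝ) ∈ Icc (g 0) (g τ₁) := ⟨by rw [hg0]; linarith, hgτ₁.le⟩
      obtain ⟨τ₀, hτ₀mem, hτ₀⟩ := hivt h0mem
      refine ⟨y + τ₀ • v, ?_, hτ₀, ?_⟩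
      · exact (hseg v hv1 τ₀ ⟨hτ₀mem.1, le_trans hτ₀mem.2 hτ₁r⟩).2
      · have : dist y (y + τ₀ • v) ≤ τ₀ := by
          rw [dist_comm]
          rw [dist_eq_norm, add_sub_cancel_left, norm_smul, Real.norm_eq_abs,
            abs_of_nonneg hτ₀mem.1]
          nlinarith [hτ₀mem.1]
        calc dist y (y + τ₀ • v) ≤ τ₀ := this
          _ ≤ τ₁ := hτ₀mem.2
          _ = (4 / m) * |F s y| := by rw [hτ₁_def, abs_of_neg hFy]; field_simp
    · -- derivative lower bound
      intro τ hτ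
      have hτ' : τ ∈ Icc (0:ℝ) τ₁ := by
        have := interior_subset (s := Icc (0:ℝ) τ₁) hτ
        exact this
      have hmem := hseg v hv1 τ ⟨hτ'.1, le_trans hτ'.2 hτ₁r⟩
      rw [(hgd τ).deriv]
      exact le_of_lt hmem.1
  · -- F s y = 0
    exact ⟨y, hyO, hFy, by simp [hFy, dist_self]⟩
  · -- F s y > 0 : move in direction -v, F decreases
    set g : ℝ → ℝ := fun τ => F s (y + τ • (-v)) with hg_def
    have hgd : ∀ τ : ℝ, HasDerivAt g (Dy F s (y + τ • (-v)) (-v)) τ := by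
      intro τ
      have hline : HasDerivAt (fun τ : ℝ => y + τ • (-v)) (-v) τ := by
        simpa using ((hasDerivAt_id τ).smul_const (-v)).const_add y
      exact (hasFDerivAt_snd hF s (y + τ • (-v))).comp_hasDerivAt τ hline
    set τ₁ := 4 * F s y / m with hτ₁_def
    have hτ₁pos : 0 < τ₁ := by positivity
    have hτ₁r : τ₁ ≤ r := by
      rw [hτ₁_def]
      rw [abs_of_pos hFy] at hsmall'
      rw [div_le_iff₀ hm]; nlinarith
    have hvneg : ‖(-v : EuclideanSpace ℝ (Fin d))‖ ≤ 1 := by simpa using hv1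
    have hmono := Convex.image_sub_le_mul_sub_of_deriv_le (convex_Icc 0 τ₁)
      (Continuous.continuousOn (by fun_prop : Continuous g))
      (fun τ _ => (hgd τ).differentiableAt.differentiableWithinAt)
      (C := -(m / 2)) (f := g) ?_ 0 ⟨le_rfl, hτ₁pos.le⟩ τ₁ ⟨hτ₁pos.le, le_rfl⟩ hτ₁pos.le
    · have hg0 : g 0 = F s y := by simp [hg_def]
      have hid : -(m / 2) * (τ₁ - 0) = -(2 * F s y) := by
        rw [hτ₁_def]; field_simp; ring
      have hgτ₁ : g τ₁ < 0 := by
        rw [hg0, hid] at hmono; linarith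
      have hivt := intermediate_value_Icc' (le_of_lt hτ₁pos)
        (Continuous.continuousOn (by fun_prop : Continuous g))
      have h0mem : (0:ℝ) ∈ Icc (g τ₁) (g 0) := ⟨hgτ₁.le, by rw [hg0]; linarith⟩
      obtain ⟨τ₀, hτ₀mem, hτ₀⟩ := hivt h0mem
      refine ⟨y + τ₀ • (-v), ?_, hτ₀, ?_⟩
      · exact (hseg (-v) hvneg τ₀ ⟨hτ₀mem.1, le_trans hτ₀mem.2 hτ₁r⟩).2
      · have hnv : ‖τ₀ • (-v : EuclideanSpace ℝ (Fin d))‖ ≤ τ₀ := by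
          rw [norm_smul, Real.norm_eq_abs, abs_of_nonneg hτ₀mem.1]
          have : ‖(-v : EuclideanSpace ℝ (Fin d))‖ ≤ 1 := hvneg
          nlinarith [hτ₀mem.1]
        have : dist y (y + τ₀ • (-v)) ≤ τ₀ := by
          rw [dist_comm, dist_eq_norm, add_sub_cancel_left]
          exact hnv
        calc dist y (y + τ₀ • (-v)) ≤ τ₀ := this
          _ ≤ τ₁ := hτ₀mem.2
          _ = (4 / m) * |F s y| := by rw [hτ₁_def, abs_of_pos hFy]; field_simp
    · intro τ hτ
      have hτ' : τ ∈ Icc (0:ℝ) τ₁ := interior_subset (s := Icc (0:ℝ) τ₁) hτ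
      have hmem := hseg (-v) hvneg τ ⟨hτ'.1, le_trans hτ'.2 hτ₁r⟩
      rw [(hgd τ).deriv, map_neg]
      have := hmem.1
      simp only [mem_setOf_eq] at this
      linarith

theorem hasDerivAt_fst' (hF : ContDiff ℝ 1 (fun z : ℝ × EuclideanSpace ℝ (Fin d) => F z.1 z.2))
    (t : ℝ) (y : EuclideanSpace ℝ (Fin d)) :
    HasDerivAt (fun τ => F τ y)
      ((fderiv ℝ (fun z : ℝ × EuclideanSpace ℝ (Fin d) => F z.1 z.2) (t, y)) (1, 0)) t := by
  have h := ((hF.differentiable one_ne_zero (t, y)).hasFDerivAt.comp t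
    (hasFDerivAt_prodMk_left t y)).hasDerivAt
  exact h

theorem lip_est (hF : ContDiff ℝ 1 (fun z : ℝ × EuclideanSpace ℝ (Fin d) => F z.1 z.2))
    (s : ℝ) (K : Set (EuclideanSpace ℝ (Fin d))) (hKcpt : IsCompact K) :
    ∃ M > 0, ∀ y ∈ K, ∀ t ∈ Icc (s - 1) (s + 1), |F t y - F s y| ≤ M * |t - s| := by
  set G := fun z : ℝ × EuclideanSpace ℝ (Fin d) => F z.1 z.2 with hG_def
  have hS : IsCompact (Icc (s - 1) (s + 1) ×ˢ K) := isCompact_Icc.prod hKcpt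
  obtain ⟨M₀, hM₀⟩ := (hS.image (hF.continuous_fderiv one_ne_zero).norm).bddAbove
  refine ⟨max M₀ 0 + 1, by positivity, ?_⟩
  intro y hy t ht
  have hbound : ∀ τ ∈ Icc (s - 1) (s + 1),
      ‖(fderiv ℝ G (τ, y)) ((1:ℝ), (0:EuclideanSpace ℝ (Fin d)))‖ ≤ max M₀ 0 + 1 := by
    intro τ hτ
    have h1 : ‖(fderiv ℝ G (τ, y)) ((1:ℝ), (0:EuclideanSpace ℝ (Fin d)))‖ ≤
        ‖fderiv ℝ G (τ, y)‖ * ‖((1:ℝ), (0:EuclideanSpace ℝ (Fin d)))‖ :=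
      (fderiv ℝ G (τ, y)).le_opNorm _
    have h2 : ‖((1:ℝ), (0:EuclideanSpace ℝ (Fin d)))‖ = 1 := by
      rw [Prod.norm_def]; simp
    have h3 : ‖fderiv ℝ G (τ, y)‖ ≤ M₀ := hM₀ ⟨(τ, y), ⟨hτ, hy⟩, rfl⟩
    rw [h2, mul_one] at h1
    calc ‖(fderiv ℝ G (τ, y)) ((1:ℝ), (0:EuclideanSpace ℝ (Fin d)))‖ ≤ M₀ := le_trans h1 h3
      _ ≤ max M₀ 0 + 1 := by linarith [le_max_left M₀ (0:ℝ)]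
  have := Convex.norm_image_sub_le_of_norm_hasDerivWithin_le
    (f := fun τ => F τ y)
    (f' := fun τ => (fderiv ℝ G (τ, y)) ((1:ℝ), (0:EuclideanSpace ℝ (Fin d))))
    (fun τ _ => (hasDerivAt_fst' hF τ y).hasDerivWithinAt) hbound (convex_Icc _ _)
    (show s ∈ Icc (s - 1) (s + 1) by constructor <;> linarith) ht
  simpa [Real.norm_eq_abs] using this
end PerfThin

open PerfThin

/-- Stability of the perforation: if `F(s, ·)` has nonvanishing gradient on its zero set
`Λ(s)` and does not vanish on the boundary of `K`, then for `t` close to `s` the symmetric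
difference of the sets `Y(s) = {F(s, ·) > 0}` and `Y(t) = {F(t, ·) > 0}` is contained in a
`C|s - t|`-neighbourhood of `Λ(s)`. -/
theorem perforation_symmDiff_in_thin_layer
    (d : ℕ) (hd : 1 ≤ d)
    (U : Set (EuclideanSpace ℝ (Fin d)))
    (hUopen : IsOpen U) (hUbdd : Bornology.IsBounded U)
    (hUne : U.Nonempty) (hUconn : IsConnected U)
    (K : Set (EuclideanSpace ℝ (Fin d))) (hK : K = closure U)
    (p q : ℝ) (J : Set ℝ) (hJ : J = Ioo p q)
    (F : ℝ → EuclideanSpace ℝ (Fin d) → ℝ)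
    (hF : ContDiff ℝ 1 (fun z : ℝ × EuclideanSpace ℝ (Fin d) => F z.1 z.2))
    (s : ℝ) (hs : s ∈ J)
    (hgrad : ∀ y ∈ K, F s y = 0 → fderiv ℝ (F s) y ≠ 0)
    (hbdry : ∀ y ∈ frontier K, F s y ≠ 0) :
    ∃ C > 0, ∃ δ > 0, ∀ t ∈ J, |s - t| < δ →
      symmDiff {y ∈ interior K | 0 < F s y} {y ∈ interior K | 0 < F t y} ⊆
        {y ∈ interior K |
          Metric.infDist y {z ∈ interior K | F s z = 0} < C * |s - t|} := by
  classical
  have hFscont : Continuous (F s) := hF.continuous.comp (Continuous.prodMk_right s)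
  have hKclosed : IsClosed K := hK ▸ isClosed_closure
  have hKcpt : IsCompact K := by
    rw [hK]
    exact (Metric.isCompact_of_isClosed_isBounded isClosed_closure hUbdd.closure)
  set Λ : Set (EuclideanSpace ℝ (Fin d)) := {z ∈ interior K | F s z = 0} with hΛ_def
  have hΛsub : Λ ⊆ interior K := fun z hz => hz.1
  have hfrontier : frontier K = K \ interior K := hKclosed.frontier_eq
  have hΛcl : IsClosed Λ := by
    refine isClosed_of_closure_subset ?_
    intro y hy
    have hyK : y ∈ K := by
      have h1 : closure Λ ⊆ closure K := closure_mono (fun z hz => interior_subset hz.1)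
      exact hKclosed.closure_eq ▸ h1 hy
    have hFy : F s y = 0 := by
      have hcl : IsClosed {y : EuclideanSpace ℝ (Fin d) | F s y = 0} :=
        isClosed_eq hFscont continuous_const
      exact hcl.closure_subset_iff.2 (fun z hz => hz.2) hy
    have hyint : y ∈ interior K := by
      by_contra hnot
      exact hbdry y (hfrontier ▸ ⟨hyK, hnot⟩) hFy
    exact ⟨hyint, hFy⟩
  have hΛcpt : IsCompact Λ := hKcpt.of_isClosed_subset hΛcl (fun z hz => interior_subset hz.1)
  -- local estimates around every point of Λ
  have hloc0 : ∀ y₀ ∈ Λ, ∃ r > 0, ∃ c > 0, ∀ y ∈ ball y₀ r, |F s y| ≤ r / c →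
      ∃ z, z ∈ interior K ∧ F s z = 0 ∧ dist y z ≤ c * |F s y| := by
    intro y₀ hy₀
    have hD : Dy F s y₀ ≠ 0 := by
      rw [← (hasFDerivAt_snd hF s y₀).fderiv]
      exact hgrad y₀ (interior_subset hy₀.1) hy₀.2
    exact local_est hF s (interior K) isOpen_interior y₀ hy₀.1 hD
  choose! r hr c hc hloc using hloc0
  -- finite subcover
  have hcover : Λ ⊆ ⋃ y₀ ∈ Λ, ball y₀ (r y₀) :=
    fun z hz => mem_biUnion hz (mem_ball_self (hr z hz))
  obtain ⟨b', hb'Λ, hb'fin, hb'cov⟩ :=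
    hΛcpt.elim_finite_subcover_image (fun i _ => isOpen_ball) hcover
  set T := hb'fin.toFinset with hT_def
  have hTmem : ∀ i, i ∈ T ↔ i ∈ b' := fun i => hb'fin.mem_toFinset
  set c₀ : ℝ := 1 + ∑ i ∈ T, c i with hc₀_def
  have hcnonneg : ∀ i ∈ T, 0 ≤ c i := fun i hi => (hc i (hb'Λ ((hTmem i).1 hi))).le
  have hc₀pos : 0 < c₀ := by
    have := Finset.sum_nonneg hcnonneg
    rw [hc₀_def]; linarith
  have hc₀ge : ∀ i ∈ T, c i ≤ c₀ := by
    intro i hi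
    have := Finset.single_le_sum hcnonneg hi
    rw [hc₀_def]; linarith
  set W : Set (EuclideanSpace ℝ (Fin d)) := ⋃ i ∈ b', ball i (r i) with hW_def
  have hWopen : IsOpen W := isOpen_biUnion (fun i _ => isOpen_ball)
  have hΛW : Λ ⊆ W := hb'cov
  -- lower bound for |F s| off W
  obtain ⟨εout, hεoutpos, hεout⟩ : ∃ ε > 0, ∀ y ∈ K \ W, ε ≤ |F s y| := by
    rcases (K \ W).eq_empty_or_nonempty with h | h
    · exact ⟨1, one_pos, by rw [h]; simp⟩
    · obtain ⟨z₀, hz₀, hmin⟩ := (hKcpt.diff hWopen).exists_isMinOn h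
        (hFscont.abs.continuousOn)
      rw [isMinOn_iff] at hmin
      refine ⟨|F s z₀|, ?_, hmin⟩
      rw [gt_iff_lt, abs_pos]
      intro hz₀F
      rcases em (z₀ ∈ interior K) with hint | hint
      · exact hz₀.2 (hΛW ⟨hint, hz₀F⟩)
      · exact hbdry z₀ (hfrontier ▸ ⟨hz₀.1, hint⟩) hz₀F
  set ε₁ : ℝ := if h : T.Nonempty then T.inf' h (fun i => r i / c i) else 1 with hε₁_def
  have hε₁pos : 0 < ε₁ := by
    rw [hε₁_def]
    split_ifs with h
    · rw [Finset.lt_inf'_iff]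
      intro i hi
      have hib' := (hTmem i).1 hi
      exact div_pos (hr i (hb'Λ hib')) (hc i (hb'Λ hib'))
    · exact one_pos
  set ε : ℝ := min εout ε₁ with hε_def
  have hεpos : 0 < ε := lt_min hεoutpos hε₁pos
  -- the key uniform estimate
  have hkey : ∀ y ∈ interior K, |F s y| < ε → Metric.infDist y Λ ≤ c₀ * |F s y| := by
    intro y hyint hys
    by_cases hyW : y ∈ W
    · obtain ⟨i, hib', hyball⟩ := mem_iUnion₂.1 hyW
      have hiT : i ∈ T := (hTmem i).2 hib'
      have hTne : T.Nonempty := ⟨i, hiT⟩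
      have hεle : ε ≤ r i / c i := by
        calc ε ≤ ε₁ := min_le_right _ _
          _ ≤ r i / c i := by
            rw [hε₁_def, dif_pos hTne]; exact Finset.inf'_le _ hiT
      obtain ⟨z, hzint, hzF, hzdist⟩ := hloc i (hb'Λ hib') y hyball (le_trans hys.le hεle)
      have hzΛ : z ∈ Λ := ⟨hzint, hzF⟩
      calc Metric.infDist y Λ ≤ dist y z := Metric.infDist_le_dist_of_mem hzΛ
        _ ≤ c i * |F s y| := hzdist
        _ ≤ c₀ * |F s y| := mul_le_mul_of_nonneg_right (hc₀ge i hiT) (abs_nonneg _)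
    · exact absurd (lt_of_lt_of_le hys (min_le_left _ _))
        (not_lt.2 (hεout y ⟨interior_subset hyint, hyW⟩))
  -- Lipschitz bound in t
  obtain ⟨M, hMpos, hlip⟩ := lip_est hF s K hKcpt
  refine ⟨c₀ * M + 1, by positivity, min 1 (ε / (M + 1)), by positivity, ?_⟩
  intro t ht hts y hy
  have hyint : y ∈ interior K := by
    rw [Set.mem_symmDiff] at hy
    rcases hy with ⟨h1, _⟩ | ⟨h1, _⟩ <;> exact h1.1
  have hst : s ≠ t := by
    rintro rfl
    rw [symmDiff_self] at hy
    exact hy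
  have habs : 0 < |s - t| := abs_pos.2 (sub_ne_zero.2 hst)
  have htIcc : t ∈ Icc (s - 1) (s + 1) := by
    have h1 : |s - t| < 1 := lt_of_lt_of_le hts (min_le_left _ _)
    rw [abs_lt] at h1
    constructor <;> linarith [h1.1, h1.2]
  have hFdiff : |F t y - F s y| ≤ M * |s - t| := by
    have := hlip y (interior_subset hyint) t htIcc
    rwa [abs_sub_comm t s] at this
  have hFsy : |F s y| ≤ |F t y - F s y| := by
    rw [Set.mem_symmDiff] at hy
    rcases hy with ⟨⟨_, h1⟩, h2⟩ | ⟨⟨_, h1⟩, h2⟩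
    · have h3 : ¬ (0 < F t y) := fun hpos => h2 ⟨hyint, hpos⟩
      push_neg at h3
      calc |F s y| = F s y := abs_of_pos h1
        _ ≤ -(F t y - F s y) := by linarith
        _ ≤ |F t y - F s y| := neg_le_abs _
    · have h3 : ¬ (0 < F s y) := fun hpos => h2 ⟨hyint, hpos⟩
      push_neg at h3
      calc |F s y| = -(F s y) := abs_of_nonpos h3
        _ ≤ F t y - F s y := by linarith
        _ ≤ |F t y - F s y| := le_abs_self _
  have hδ : |s - t| < ε / (M + 1) := lt_of_lt_of_le hts (min_le_right _ _)
  have hsmall : |F s y| < ε := by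
    have h1 : M * |s - t| < M * (ε / (M + 1)) := by
      exact mul_lt_mul_of_pos_left hδ hMpos
    have h2 : M * (ε / (M + 1)) < ε := by
      rw [mul_div_assoc']
      rw [div_lt_iff₀ (by linarith : (0:ℝ) < M + 1)]
      nlinarith
    linarith
  have hinf := hkey y hyint hsmall
  refine ⟨hyint, ?_⟩
  have h4 : c₀ * |F s y| ≤ c₀ * (M * |s - t|) :=
    mul_le_mul_of_nonneg_left (le_trans hFsy hFdiff) hc₀pos.le
  calc Metric.infDist y Λ ≤ c₀ * |F s y| := hinf
    _ ≤ c₀ * M * |s - t| := by rw [mul_assoc]; exact h4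
    _ < (c₀ * M + 1) * |s - t| := by nlinarith
end

section
/- There exists a constant C > 0, depending only on d, C₁, C₂ and the Lipschitz constant of a, such that for all δ with 0 < δ < C₂/2 and every function v that is continuously differentiable on a neighborhood of V, one has ∫_{V_δ} v(y)² dy ≤ C δ ( ∫_V v(y)² dy + ∫_V |v(y)| |∇v(y)| dy ). -/
open MeasureTheory Set

lemma oneDim (A c₂ δ : ℝ) (hc₂ : 0 < c₂) (hδ : 0 < δ) (hδc : δ < c₂ / 2)
    (h g : ℝ → ℝ) (hpos : ∀ t, 0 ≤ h t)
    (hcont : ContinuousOn h (Icc (A - c₂) (A + c₂)))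
    (hgcont : ContinuousOn g (Icc (A - c₂) (A + c₂)))
    (hderiv : ∀ t ∈ Icc (A - c₂) (A + c₂), HasDerivAt h (g t) t) :
    ∫ t in Ioo (A - δ) (A + δ), h t ≤
      2 * δ * ((2 / c₂) * (∫ t in Icc (A - c₂) (A + c₂), h t)
        + ∫ t in Icc (A - c₂) (A + c₂), |g t|) := by
  have hδc₂ : δ < c₂ := by linarith
  set I : Set ℝ := Icc (A - c₂) (A + c₂) with hI
  have hIh : IntegrableOn h I := hcont.integrableOn_compact isCompact_Icc
  have hIg : IntegrableOn (fun t => |g t|) I :=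
    (hgcont.abs).integrableOn_compact isCompact_Icc
  have hJI : Icc (A + δ) (A + c₂) ⊆ I := Icc_subset_Icc (by linarith) le_rfl
  obtain ⟨s₀, hs₀J, hmin⟩ := isCompact_Icc.exists_isMinOn
    (nonempty_Icc.2 (by linarith)) (hcont.mono hJI)
  have hIhnn : 0 ≤ ∫ t in I, h t := setIntegral_nonneg measurableSet_Icc fun t _ => hpos t
  have hIgnn : 0 ≤ ∫ t in I, |g t| := setIntegral_nonneg measurableSet_Icc fun t _ => abs_nonneg _
  have key1 : (c₂ - δ) * h s₀ ≤ ∫ t in Icc (A + δ) (A + c₂), h t := by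
    have := setIntegral_mono_on (f := fun _ => h s₀) (g := h)
      (integrableOn_const (by simp [Real.volume_Icc]) (by simp))
      (hIh.mono_set hJI) measurableSet_Icc (fun t ht => hmin ht)
    rwa [setIntegral_const, measureReal_def, Real.volume_Icc, ENNReal.toReal_ofReal (by linarith),
      smul_eq_mul, show A + c₂ - (A + δ) = c₂ - δ by ring] at this
  have key2 : ∫ t in Icc (A + δ) (A + c₂), h t ≤ ∫ t in I, h t :=
    setIntegral_mono_set hIh (Filter.Eventually.of_forall fun t => hpos t)
      (HasSubset.Subset.eventuallyLE hJI)
  have hs₀bound : h s₀ ≤ (2 / c₂) * ∫ t in I, h t := by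
    have h1 : (c₂ - δ) * h s₀ ≤ ∫ t in I, h t := le_trans key1 key2
    have h2 : 0 ≤ h s₀ := hpos s₀
    rw [div_mul_eq_mul_div, le_div_iff₀ hc₂]
    nlinarith
  set M : ℝ := (2 / c₂) * (∫ t in I, h t) + ∫ t in I, |g t| with hM
  have hpt : ∀ t ∈ Ioo (A - δ) (A + δ), h t ≤ M := by
    intro t ht
    have hts₀ : t ≤ s₀ := le_trans (le_of_lt ht.2) hs₀J.1
    have hsub : uIcc t s₀ ⊆ I := by
      rw [uIcc_of_le hts₀]
      exact Icc_subset_Icc (by linarith [ht.1]) hs₀J.2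
    have hftc : ∫ u in t..s₀, g u = h s₀ - h t :=
      intervalIntegral.integral_eq_sub_of_hasDerivAt (fun u hu => hderiv u (hsub hu))
        ((hgcont.mono hsub).intervalIntegrable)
    have habs : |∫ u in t..s₀, g u| ≤ ∫ t in I, |g t| := by
      refine le_trans (intervalIntegral.abs_integral_le_integral_abs hts₀) ?_
      rw [intervalIntegral.integral_of_le hts₀]
      exact setIntegral_mono_set hIg (Filter.Eventually.of_forall fun t => abs_nonneg _)
        (HasSubset.Subset.eventuallyLE ((Ioc_subset_Icc_self).trans
          (by rw [← uIcc_of_le hts₀]; exact hsub)))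
    have : h t ≤ h s₀ + |∫ u in t..s₀, g u| := by
      have := neg_abs_le (∫ u in t..s₀, g u)
      linarith [hftc ▸ this]
    calc h t ≤ h s₀ + |∫ u in t..s₀, g u| := this
      _ ≤ (2 / c₂) * (∫ t in I, h t) + ∫ t in I, |g t| := add_le_add hs₀bound habs
  have hIoo : Ioo (A - δ) (A + δ) ⊆ I := Ioo_subset_Icc_self.trans
    (Icc_subset_Icc (by linarith) (by linarith))
  have final : ∫ t in Ioo (A - δ) (A + δ), h t ≤ ∫ t in Ioo (A - δ) (A + δ), M := by
    exact setIntegral_mono_on (hIh.mono_set hIoo)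
      (integrableOn_const (by simp [Real.volume_Ioo]) (by simp))
      measurableSet_Ioo hpt
  rw [setIntegral_const, measureReal_def, Real.volume_Ioo, ENNReal.toReal_ofReal (by linarith),
    smul_eq_mul, show A + δ - (A - δ) = 2 * δ by ring] at final
  exact final

set_option maxHeartbeats 1000000 in
/-- Trace-type estimate in a thin boundary layer of a Lipschitz graph cell. -/
theorem thin_layer_trace_estimate
    (m : ℕ) (C₁ C₂ : ℝ) (hC₁ : 0 < C₁) (hC₂ : 0 < C₂) (L : NNReal) :
    ∃ C > 0, ∀ a : EuclideanSpace ℝ (Fin m) → ℝ, LipschitzWith L a →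
      ∀ δ : ℝ, 0 < δ → δ < C₂ / 2 →
      ∀ v : EuclideanSpace ℝ (Fin m) × ℝ → ℝ,
      (∃ U : Set (EuclideanSpace ℝ (Fin m) × ℝ), IsOpen U ∧
        {y : EuclideanSpace ℝ (Fin m) × ℝ |
            (∀ i, |y.1 i| ≤ C₁) ∧ |y.2 - a y.1| ≤ C₂} ⊆ U ∧
        ContDiffOn ℝ 1 v U) →
      (∫ y in {y : EuclideanSpace ℝ (Fin m) × ℝ |
            ((∀ i, |y.1 i| ≤ C₁) ∧ |y.2 - a y.1| ≤ C₂) ∧ |y.2 - a y.1| < δ},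
          v y ^ 2) ≤
        C * δ *
          ((∫ y in {y : EuclideanSpace ℝ (Fin m) × ℝ |
                (∀ i, |y.1 i| ≤ C₁) ∧ |y.2 - a y.1| ≤ C₂}, v y ^ 2) +
            ∫ y in {y : EuclideanSpace ℝ (Fin m) × ℝ |
                (∀ i, |y.1 i| ≤ C₁) ∧ |y.2 - a y.1| ≤ C₂},
              |v y| * ‖fderiv ℝ v y‖) := by
  classical
  refine ⟨2 * max (2 / C₂) 2, by positivity, ?_⟩
  intro a ha δ hδ0 hδc v hU
  obtain ⟨U, hUopen, hVU, hv⟩ := hU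
  set V : Set (EuclideanSpace ℝ (Fin m) × ℝ) := {y : EuclideanSpace ℝ (Fin m) × ℝ | (∀ i, |y.1 i| ≤ C₁) ∧ |y.2 - a y.1| ≤ C₂} with hVdef
  set Vδ : Set (EuclideanSpace ℝ (Fin m) × ℝ) := {y : EuclideanSpace ℝ (Fin m) × ℝ |
      ((∀ i, |y.1 i| ≤ C₁) ∧ |y.2 - a y.1| ≤ C₂) ∧ |y.2 - a y.1| < δ} with hVδdef
  have hδC₂ : δ < C₂ := by linarith
  -- topological facts
  have hacont : Continuous a := ha.continuous
  have hφ : Continuous (fun y : EuclideanSpace ℝ (Fin m) × ℝ => y.2 - a y.1) :=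
    continuous_snd.sub (hacont.comp continuous_fst)
  have hQclosed : IsClosed {x : EuclideanSpace ℝ (Fin m) | ∀ i, |x i| ≤ C₁} := by
    have : {x : EuclideanSpace ℝ (Fin m) | ∀ i, |x i| ≤ C₁} = ⋂ i, {x : EuclideanSpace ℝ (Fin m) | |x i| ≤ C₁} := by
      ext x; simp [mem_iInter]
    rw [this]
    exact isClosed_iInter fun i => isClosed_Iic.preimage (((continuous_apply i).comp (PiLp.continuous_ofLp ..)).abs)
  have hVclosed : IsClosed V := by
    have : V = (Prod.fst ⁻¹' {x : EuclideanSpace ℝ (Fin m) | ∀ i, |x i| ≤ C₁}) ∩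
        {y : EuclideanSpace ℝ (Fin m) × ℝ | |y.2 - a y.1| ≤ C₂} := by ext y; simp [hVdef]
    rw [this]
    exact (hQclosed.preimage continuous_fst).inter (isClosed_Iic.preimage hφ.abs)
  -- boundedness of V
  have hQnorm : ∀ x : EuclideanSpace ℝ (Fin m), (∀ i, |x i| ≤ C₁) → ‖x‖ ≤ Real.sqrt m * C₁ := by
    intro x hx
    rw [EuclideanSpace.norm_eq]
    have h1 : (∑ i, ‖x i‖ ^ 2) ≤ (m : ℝ) * C₁ ^ 2 := by
      calc (∑ i, ‖x i‖ ^ 2) ≤ ∑ _i : Fin m, C₁ ^ 2 := by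
            refine Finset.sum_le_sum fun i _ => ?_
            have := hx i
            rw [Real.norm_eq_abs]
            nlinarith [abs_nonneg (x i)]
        _ = (m : ℝ) * C₁ ^ 2 := by simp [Finset.sum_const]
    calc Real.sqrt (∑ i, ‖x i‖ ^ 2) ≤ Real.sqrt ((m : ℝ) * C₁ ^ 2) := Real.sqrt_le_sqrt h1
      _ = Real.sqrt m * C₁ := by
          rw [Real.sqrt_mul (Nat.cast_nonneg m), Real.sqrt_sq hC₁.le]
  have hVbounded : Bornology.IsBounded V := by
    rw [isBounded_iff_forall_norm_le]
    refine ⟨max (Real.sqrt m * C₁) (C₂ + |a 0| + L * (Real.sqrt m * C₁)), ?_⟩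
    rintro ⟨x, t⟩ ⟨hx, ht⟩
    have h1 : ‖x‖ ≤ Real.sqrt m * C₁ := hQnorm x hx
    have h2 : |a x - a 0| ≤ L * ‖x‖ := by
      have := ha.dist_le_mul x 0
      simpa [Real.dist_eq] using this
    have h3 : |t| ≤ C₂ + |a 0| + L * (Real.sqrt m * C₁) := by
      have htri : |t| ≤ |t - a x| + |a x - a 0| + |a 0| := by
        calc |t| = |t - a x + (a x - a 0) + a 0| := by ring_nf
          _ ≤ |t - a x + (a x - a 0)| + |a 0| := abs_add_le _ _
          _ ≤ |t - a x| + |a x - a 0| + |a 0| := by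
              linarith [abs_add_le (t - a x) (a x - a 0)]
      have hL : (L : ℝ) * ‖x‖ ≤ L * (Real.sqrt m * C₁) := by
        exact mul_le_mul_of_nonneg_left h1 L.coe_nonneg
      linarith
    rw [Prod.norm_def]
    simp only [sup_le_iff]
    constructor
    · exact le_trans h1 (le_max_left _ _)
    · rw [Real.norm_eq_abs]; exact le_trans h3 (le_max_right _ _)
  have hVcompact : IsCompact V := Metric.isCompact_of_isClosed_isBounded hVclosed hVbounded
  have hVmeas : MeasurableSet V := hVclosed.measurableSet
  have hVδmeas : MeasurableSet Vδ := by
    have : Vδ = V ∩ {y : EuclideanSpace ℝ (Fin m) × ℝ | |y.2 - a y.1| < δ} := by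
      rw [hVδdef, hVdef]; ext y; simp only [mem_setOf_eq, mem_inter_iff]
    rw [this]
    exact hVmeas.inter (isOpen_Iio.preimage hφ.abs).measurableSet
  -- continuity / integrability of integrands
  have hvcont : ContinuousOn v V := (hv.continuousOn).mono hVU
  have hfcontU : ContinuousOn (fderiv ℝ v) U :=
    hv.continuousOn_fderiv_of_isOpen hUopen le_rfl
  have hfcont : ContinuousOn (fderiv ℝ v) V := hfcontU.mono hVU
  have hint1 : IntegrableOn (fun y => v y ^ 2) V :=
    ((hvcont.pow 2)).integrableOn_compact hVcompact
  have hint2 : IntegrableOn (fun y => 2 * |v y| * ‖fderiv ℝ v y‖) V := by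
    exact (((continuousOn_const.mul hvcont.abs).mul hfcont.norm)).integrableOn_compact hVcompact
  have hint2' : IntegrableOn (fun y => |v y| * ‖fderiv ℝ v y‖) V :=
    ((hvcont.abs.mul hfcont.norm)).integrableOn_compact hVcompact
  have hVδV : Vδ ⊆ V := fun y hy => hy.1
  have hint3 : IntegrableOn (fun y => v y ^ 2) Vδ := hint1.mono_set hVδV
  -- indicator functions
  set F : EuclideanSpace ℝ (Fin m) × ℝ → ℝ := Vδ.indicator (fun y => v y ^ 2) with hF
  set G : EuclideanSpace ℝ (Fin m) × ℝ → ℝ := V.indicator (fun y => v y ^ 2) with hG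
  set H : EuclideanSpace ℝ (Fin m) × ℝ → ℝ := V.indicator (fun y => 2 * |v y| * ‖fderiv ℝ v y‖) with hH
  have hFint : Integrable F := (integrable_indicator_iff hVδmeas).2 hint3
  have hGint : Integrable G := (integrable_indicator_iff hVmeas).2 hint1
  have hHint : Integrable H := (integrable_indicator_iff hVmeas).2 hint2
  have hFint' : Integrable F ((volume : Measure (EuclideanSpace ℝ (Fin m))).prod volume) := by
    rwa [← Measure.volume_eq_prod]
  have hGint' : Integrable G ((volume : Measure (EuclideanSpace ℝ (Fin m))).prod volume) := by
    rwa [← Measure.volume_eq_prod]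
  have hHint' : Integrable H ((volume : Measure (EuclideanSpace ℝ (Fin m))).prod volume) := by
    rwa [← Measure.volume_eq_prod]
  -- slice identities
  have hsliceF : ∀ x : EuclideanSpace ℝ (Fin m), (∀ i, |x i| ≤ C₁) →
      (fun t => F (x, t)) = (Ioo (a x - δ) (a x + δ)).indicator (fun t => v (x, t) ^ 2) := by
    intro x hx
    funext t
    simp only [hF, indicator_apply, hVδdef, mem_setOf_eq, mem_Ioo]
    congr 1
    simp only [eq_iff_iff]
    constructor
    · rintro ⟨-, h2⟩
      rw [abs_lt] at h2; constructor <;> linarith [h2.1, h2.2]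
    · rintro ⟨h1, h2⟩
      refine ⟨⟨hx, ?_⟩, ?_⟩
      · rw [abs_le]; constructor <;> linarith
      · rw [abs_lt]; constructor <;> linarith
  have hsliceG : ∀ x : EuclideanSpace ℝ (Fin m), (∀ i, |x i| ≤ C₁) →
      (fun t => G (x, t)) = (Icc (a x - C₂) (a x + C₂)).indicator (fun t => v (x, t) ^ 2) := by
    intro x hx
    funext t
    simp only [hG, indicator_apply, hVdef, mem_setOf_eq, mem_Icc]
    congr 1
    simp only [eq_iff_iff]
    constructor
    · rintro ⟨-, h2⟩
      rw [abs_le] at h2; constructor <;> linarith [h2.1, h2.2]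
    · rintro ⟨h1, h2⟩
      exact ⟨hx, by rw [abs_le]; constructor <;> linarith⟩
  have hsliceH : ∀ x : EuclideanSpace ℝ (Fin m), (∀ i, |x i| ≤ C₁) →
      (fun t => H (x, t)) = (Icc (a x - C₂) (a x + C₂)).indicator
        (fun t => 2 * |v (x, t)| * ‖fderiv ℝ v (x, t)‖) := by
    intro x hx
    funext t
    simp only [hH, indicator_apply, hVdef, mem_setOf_eq, mem_Icc]
    congr 1
    simp only [eq_iff_iff]
    constructor
    · rintro ⟨-, h2⟩
      rw [abs_le] at h2; constructor <;> linarith [h2.1, h2.2]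
    · rintro ⟨h1, h2⟩
      exact ⟨hx, by rw [abs_le]; constructor <;> linarith⟩
  have hzeroF : ∀ x : EuclideanSpace ℝ (Fin m), ¬ (∀ i, |x i| ≤ C₁) → (fun t => F (x, t)) = fun _ => (0:ℝ) := by
    intro x hx; funext t
    simp only [hF, indicator_apply, hVδdef, mem_setOf_eq]
    rw [if_neg]; rintro ⟨⟨h1, -⟩, -⟩; exact hx h1
  have hzeroG : ∀ x : EuclideanSpace ℝ (Fin m), ¬ (∀ i, |x i| ≤ C₁) → (fun t => G (x, t)) = fun _ => (0:ℝ) := by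
    intro x hx; funext t
    simp only [hG, indicator_apply, hVdef, mem_setOf_eq]
    rw [if_neg]; rintro ⟨h1, -⟩; exact hx h1
  have hzeroH : ∀ x : EuclideanSpace ℝ (Fin m), ¬ (∀ i, |x i| ≤ C₁) → (fun t => H (x, t)) = fun _ => (0:ℝ) := by
    intro x hx; funext t
    simp only [hH, indicator_apply, hVdef, mem_setOf_eq]
    rw [if_neg]; rintro ⟨h1, -⟩; exact hx h1
  -- pointwise-in-x inequality
  have hptwise : ∀ x : EuclideanSpace ℝ (Fin m), (∫ t, F (x, t)) ≤
      2 * δ * ((2 / C₂) * (∫ t, G (x, t)) + ∫ t, H (x, t)) := by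
    intro x
    by_cases hx : ∀ i, |x i| ≤ C₁
    · rw [hsliceF x hx, hsliceG x hx, hsliceH x hx,
        integral_indicator measurableSet_Ioo, integral_indicator measurableSet_Icc,
        integral_indicator measurableSet_Icc]
      -- apply 1d lemma
      have hmemV : ∀ t ∈ Icc (a x - C₂) (a x + C₂), ((x, t) : EuclideanSpace ℝ (Fin m) × ℝ) ∈ V := by
        intro t ht
        refine ⟨hx, ?_⟩
        rw [abs_le]; exact ⟨by linarith [ht.1], by linarith [ht.2]⟩
      have hmemU : ∀ t ∈ Icc (a x - C₂) (a x + C₂), ((x, t) : EuclideanSpace ℝ (Fin m) × ℝ) ∈ U :=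
        fun t ht => hVU (hmemV t ht)
      have hcurve : ∀ t : ℝ, HasDerivAt (fun t : ℝ => ((x, t) : EuclideanSpace ℝ (Fin m) × ℝ)) ((0 : EuclideanSpace ℝ (Fin m)), (1:ℝ)) t :=
        fun t => (hasDerivAt_const t x).prodMk (hasDerivAt_id t)
      have hinner : ContinuousOn (fun t => v (x, t)) (Icc (a x - C₂) (a x + C₂)) := by
        refine (hv.continuousOn).comp (Continuous.continuousOn (continuous_const.prodMk continuous_id)) ?_
        intro t ht; exact hmemU t ht
      have hDcont : ContinuousOn (fun t => (fderiv ℝ v (x, t)) ((0 : EuclideanSpace ℝ (Fin m)), (1:ℝ)))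
          (Icc (a x - C₂) (a x + C₂)) := by
        refine ContinuousOn.clm_apply ?_ continuousOn_const
        refine hfcontU.comp (Continuous.continuousOn (continuous_const.prodMk continuous_id)) ?_
        intro t ht; exact hmemU t ht
      have hgcont : ContinuousOn
          (fun t => 2 * v (x, t) * (fderiv ℝ v (x, t)) ((0 : EuclideanSpace ℝ (Fin m)), (1:ℝ)))
          (Icc (a x - C₂) (a x + C₂)) :=
        (continuousOn_const.mul hinner).mul hDcont
      have hderiv : ∀ t ∈ Icc (a x - C₂) (a x + C₂),
          HasDerivAt (fun t => v (x, t) ^ 2)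
            (2 * v (x, t) * (fderiv ℝ v (x, t)) ((0 : EuclideanSpace ℝ (Fin m)), (1:ℝ))) t := by
        intro t ht
        have hdv : DifferentiableAt ℝ v (x, t) :=
          (hv.differentiableOn one_ne_zero).differentiableAt (hUopen.mem_nhds (hmemU t ht))
        have hcomp : HasDerivAt (fun t => v (x, t))
            ((fderiv ℝ v (x, t)) ((0 : EuclideanSpace ℝ (Fin m)), (1:ℝ))) t :=
          (hdv.hasFDerivAt).comp_hasDerivAt t (hcurve t)
        have := hcomp.fun_pow 2
        refine this.congr_deriv ?_
        push_cast
        ring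
      have h1d := oneDim (a x) C₂ δ hC₂ hδ0 hδc (fun t => v (x, t) ^ 2)
        (fun t => 2 * v (x, t) * (fderiv ℝ v (x, t)) ((0 : EuclideanSpace ℝ (Fin m)), (1:ℝ)))
        (fun t => sq_nonneg _) (hinner.pow 2) hgcont hderiv
      refine le_trans h1d ?_
      gcongr 2 * δ * ((2 / C₂) * ?_ + ?_)
      · -- |g| ≤ 2|v|‖fderiv‖
        refine setIntegral_mono_on
          ((hgcont.abs).integrableOn_compact isCompact_Icc)
          (((continuousOn_const.mul hinner.abs).mul
            ((hfcontU.comp (Continuous.continuousOn (continuous_const.prodMk continuous_id))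
              (fun t ht => hmemU t ht)).norm)).integrableOn_compact isCompact_Icc)
          measurableSet_Icc ?_
        intro t ht
        have hop : |(fderiv ℝ v (x, t)) ((0 : EuclideanSpace ℝ (Fin m)), (1:ℝ))| ≤ ‖fderiv ℝ v (x, t)‖ := by
          calc |(fderiv ℝ v (x, t)) ((0 : EuclideanSpace ℝ (Fin m)), (1:ℝ))|
              ≤ ‖fderiv ℝ v (x, t)‖ * ‖((0 : EuclideanSpace ℝ (Fin m)), (1:ℝ))‖ :=
                (fderiv ℝ v (x, t)).le_opNorm _
            _ = ‖fderiv ℝ v (x, t)‖ := by rw [Prod.norm_def]; simp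
        rw [abs_mul, abs_mul, abs_two]
        calc 2 * |v (x, t)| * |(fderiv ℝ v (x, t)) ((0 : EuclideanSpace ℝ (Fin m)), (1:ℝ))|
            ≤ 2 * |v (x, t)| * ‖fderiv ℝ v (x, t)‖ := by
              gcongr
          _ = 2 * |v (x, t)| * ‖fderiv ℝ v (x, t)‖ := rfl
    · rw [hzeroF x hx, hzeroG x hx, hzeroH x hx]
      simp only [MeasureTheory.integral_zero]
      positivity
  -- Fubini
  have hFeq : (∫ y in Vδ, v y ^ 2) = ∫ x : EuclideanSpace ℝ (Fin m), ∫ t : ℝ, F (x, t) := by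
    rw [← integral_indicator hVδmeas, ← hF]
    rw [show (∫ y : EuclideanSpace ℝ (Fin m) × ℝ, F y) = ∫ y : EuclideanSpace ℝ (Fin m) × ℝ, F y ∂((volume : Measure (EuclideanSpace ℝ (Fin m))).prod volume) by
      rw [← Measure.volume_eq_prod]]
    exact MeasureTheory.integral_prod F hFint'
  have hGeq : (∫ y in V, v y ^ 2) = ∫ x : EuclideanSpace ℝ (Fin m), ∫ t : ℝ, G (x, t) := by
    rw [← integral_indicator hVmeas, ← hG]
    rw [show (∫ y : EuclideanSpace ℝ (Fin m) × ℝ, G y) = ∫ y : EuclideanSpace ℝ (Fin m) × ℝ, G y ∂((volume : Measure (EuclideanSpace ℝ (Fin m))).prod volume) by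
      rw [← Measure.volume_eq_prod]]
    exact MeasureTheory.integral_prod G hGint'
  have hHeq : (∫ y in V, 2 * |v y| * ‖fderiv ℝ v y‖) = ∫ x : EuclideanSpace ℝ (Fin m), ∫ t : ℝ, H (x, t) := by
    rw [← integral_indicator hVmeas, ← hH]
    rw [show (∫ y : EuclideanSpace ℝ (Fin m) × ℝ, H y) = ∫ y : EuclideanSpace ℝ (Fin m) × ℝ, H y ∂((volume : Measure (EuclideanSpace ℝ (Fin m))).prod volume) by
      rw [← Measure.volume_eq_prod]]
    exact MeasureTheory.integral_prod H hHint'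
  have hFx : Integrable (fun x : EuclideanSpace ℝ (Fin m) => ∫ t : ℝ, F (x, t)) := hFint'.integral_prod_left
  have hGx : Integrable (fun x : EuclideanSpace ℝ (Fin m) => ∫ t : ℝ, G (x, t)) := hGint'.integral_prod_left
  have hHx : Integrable (fun x : EuclideanSpace ℝ (Fin m) => ∫ t : ℝ, H (x, t)) := hHint'.integral_prod_left
  have hmono : (∫ x : EuclideanSpace ℝ (Fin m), ∫ t : ℝ, F (x, t)) ≤
      ∫ x : EuclideanSpace ℝ (Fin m), 2 * δ * ((2 / C₂) * (∫ t : ℝ, G (x, t)) + ∫ t : ℝ, H (x, t)) := by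
    refine integral_mono hFx ?_ hptwise
    exact (((hGx.const_mul _).add hHx).const_mul _)
  have hrhs : (∫ x : EuclideanSpace ℝ (Fin m), 2 * δ * ((2 / C₂) * (∫ t : ℝ, G (x, t)) + ∫ t : ℝ, H (x, t))) =
      2 * δ * ((2 / C₂) * (∫ y in V, v y ^ 2) + ∫ y in V, 2 * |v y| * ‖fderiv ℝ v y‖) := by
    rw [integral_const_mul, integral_add (hGx.const_mul _) hHx, integral_const_mul,
      hGeq, hHeq]
  -- conclude
  have hI1 : 0 ≤ ∫ y in V, v y ^ 2 := setIntegral_nonneg hVmeas fun y _ => sq_nonneg _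
  have hI2 : 0 ≤ ∫ y in V, |v y| * ‖fderiv ℝ v y‖ :=
    setIntegral_nonneg hVmeas fun y _ => mul_nonneg (abs_nonneg _) (norm_nonneg _)
  have hH2 : (∫ y in V, 2 * |v y| * ‖fderiv ℝ v y‖) =
      2 * ∫ y in V, |v y| * ‖fderiv ℝ v y‖ := by
    rw [← integral_const_mul]
    congr 1; funext y; ring
  have key : (∫ y in Vδ, v y ^ 2) ≤
      2 * δ * ((2 / C₂) * (∫ y in V, v y ^ 2) + 2 * ∫ y in V, |v y| * ‖fderiv ℝ v y‖) := by
    rw [hFeq]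
    calc (∫ x : EuclideanSpace ℝ (Fin m), ∫ t : ℝ, F (x, t)) ≤ _ := hmono
      _ = _ := hrhs
      _ = _ := by rw [hH2]
  refine le_trans key ?_
  have hK1 : 2 / C₂ ≤ max (2 / C₂) 2 := le_max_left _ _
  have hK2 : (2:ℝ) ≤ max (2 / C₂) 2 := le_max_right _ _
  have hKnn : (0:ℝ) ≤ max (2 / C₂) 2 := by positivity
  nlinarith [mul_le_mul_of_nonneg_right hK1 hI1, mul_le_mul_of_nonneg_right hK2 hI2,
    mul_le_mul_of_nonneg_left (add_le_add (mul_le_mul_of_nonneg_right hK1 hI1)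
      (mul_le_mul_of_nonneg_right hK2 hI2)) (by linarith : (0:ℝ) ≤ 2 * δ)]
end

section
/- Let v : ℝ → ℝ be a continuously differentiable function with compact support which is not identically zero. Then ∫_ℝ v′(y)² dy + ∫_ℝ y² v(y)² dy > ∫_ℝ v(y)² dy. (This is the strict ground-state inequality for the harmonic oscillator −d²/dy² + y², ground state e^{−y²/2} with eigenvalue 1; it implies that the principal Dirichlet eigenvalue μ₁^ε of −v″ + y²v on (−ε^{−1/4}, ε^{−1/4}) is strictly greater than 1.) -/
open MeasureTheory Set

lemma integral_deriv_eq_zero_of_compact_support (f : ℝ → ℝ) (hf : ContDiff ℝ 1 f)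
    (h2f : HasCompactSupport f) : ∫ y : ℝ, deriv f y = 0 := by
  have hint : Integrable (deriv f) :=
    (hf.continuous_deriv le_rfl).integrable_of_hasCompactSupport h2f.deriv
  rw [← intervalIntegral.integral_Iic_add_Ioi (b := 0) hint.integrableOn hint.integrableOn,
    h2f.integral_Iic_deriv_eq hf 0, h2f.integral_Ioi_deriv_eq hf 0]
  ring

/-- Strict ground-state inequality for the harmonic oscillator `-d²/dy² + y²`:
for every nonzero compactly supported `C¹` function `v`,
`∫ v'² + ∫ y² v² > ∫ v²`. -/
theorem harmonic_oscillator_ground_state_strict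
    (v : ℝ → ℝ) (hv : ContDiff ℝ 1 v) (hsupp : HasCompactSupport v) (hne : v ≠ 0) :
    (∫ y : ℝ, v y ^ 2) <
      (∫ y : ℝ, (deriv v y) ^ 2) + ∫ y : ℝ, y ^ 2 * v y ^ 2 := by
  have hvd : Differentiable ℝ v := hv.differentiable one_ne_zero
  have hvc : Continuous v := hv.continuous
  have hdc : Continuous (deriv v) := hv.continuous_deriv le_rfl
  set g : ℝ → ℝ := fun y => deriv v y + y * v y with hg_def
  have hgc : Continuous g := hdc.add (continuous_id.mul hvc)
  have hgsupp : HasCompactSupport g := by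
    apply HasCompactSupport.add hsupp.deriv
    exact HasCompactSupport.mul_left hsupp
  -- F y = y * v y ^ 2
  set F : ℝ → ℝ := fun y => y * v y ^ 2 with hF_def
  have hFc : ContDiff ℝ 1 F := contDiff_id.mul (hv.pow 2)
  have hFsupp : HasCompactSupport F :=
    HasCompactSupport.mul_left (hsupp.comp_left (g := fun t => t ^ 2) (by simp))
  have hF' : ∀ y : ℝ, deriv F y = v y ^ 2 + y * (2 * v y * deriv v y) := by
    intro y
    have h1 : HasDerivAt F (1 * v y ^ 2 + y * (2 * v y ^ 1 * deriv v y)) y :=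
      (hasDerivAt_id y).mul ((hvd y).hasDerivAt.pow 2)
    have := h1.deriv
    rw [this]; ring
  -- integrability
  have hIA : Integrable (fun y : ℝ => deriv v y ^ 2) :=
    (show Continuous (fun y : ℝ => deriv v y ^ 2) from hdc.pow 2).integrable_of_hasCompactSupport
      (hsupp.deriv.comp_left (g := fun t => t ^ 2) (by simp))
  have hIB : Integrable (fun y : ℝ => y ^ 2 * v y ^ 2) :=
    (show Continuous (fun y : ℝ => y ^ 2 * v y ^ 2) from (continuous_id.pow 2).mul (hvc.pow 2)).integrable_of_hasCompactSupport
      (HasCompactSupport.mul_left (hsupp.comp_left (g := fun t => t ^ 2) (by simp)))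
  have hIC : Integrable (fun y : ℝ => v y ^ 2) :=
    (show Continuous (fun y : ℝ => v y ^ 2) from hvc.pow 2).integrable_of_hasCompactSupport
      (hsupp.comp_left (g := fun t => t ^ 2) (by simp))
  have hIF : Integrable (deriv F) :=
    (hFc.continuous_deriv le_rfl).integrable_of_hasCompactSupport hFsupp.deriv
  -- key identity
  have hkey : ∀ y : ℝ, g y ^ 2 =
      (deriv v y ^ 2 + y ^ 2 * v y ^ 2 - v y ^ 2) + deriv F y := by
    intro y; rw [hF' y]; simp only [hg_def]; ring
  have hGint : Integrable (fun y : ℝ => g y ^ 2) :=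
    (show Continuous (fun y : ℝ => g y ^ 2) from hgc.pow 2).integrable_of_hasCompactSupport
      (hgsupp.comp_left (g := fun t => t ^ 2) (by simp))
  have hGval : (∫ y : ℝ, g y ^ 2) =
      ((∫ y : ℝ, deriv v y ^ 2) + ∫ y : ℝ, y ^ 2 * v y ^ 2) - ∫ y : ℝ, v y ^ 2 := by
    calc (∫ y : ℝ, g y ^ 2)
        = ∫ y : ℝ, ((deriv v y ^ 2 + y ^ 2 * v y ^ 2 - v y ^ 2) + deriv F y) :=
          integral_congr_ae (Filter.Eventually.of_forall hkey)
      _ = (∫ y : ℝ, (deriv v y ^ 2 + y ^ 2 * v y ^ 2 - v y ^ 2)) + ∫ y : ℝ, deriv F y :=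
          integral_add ((hIA.add hIB).sub hIC) hIF
      _ = ((∫ y : ℝ, deriv v y ^ 2) + ∫ y : ℝ, y ^ 2 * v y ^ 2) - ∫ y : ℝ, v y ^ 2 := by
          rw [integral_deriv_eq_zero_of_compact_support F hFc hFsupp, add_zero,
            integral_sub (f := fun y : ℝ => deriv v y ^ 2 + y ^ 2 * v y ^ 2) (hIA.add hIB) hIC, integral_add hIA hIB]
  -- positivity of ∫ g²
  have hGnonneg : 0 ≤ ∫ y : ℝ, g y ^ 2 :=
    integral_nonneg fun y => sq_nonneg _
  have hGne : (∫ y : ℝ, g y ^ 2) ≠ 0 := by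
    intro h0
    have : (fun y : ℝ => g y ^ 2) =ᵐ[volume] 0 :=
      (integral_eq_zero_iff_of_nonneg (fun y => sq_nonneg _) hGint).mp h0
    have hg0 : ∀ y : ℝ, g y = 0 := by
      have heq : (fun y : ℝ => g y ^ 2) = 0 :=
        (Continuous.ae_eq_iff_eq volume (hgc.pow 2) continuous_const).mp this
      intro y
      have h := congrFun heq y
      simpa using h
    -- then v = c e^{-y²/2}; compact support forces v = 0
    set w : ℝ → ℝ := fun y => v y * Real.exp (y ^ 2 / 2) with hw_def
    have hwderiv : ∀ y : ℝ, HasDerivAt w 0 y := by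
      intro y
      have he : HasDerivAt (fun y : ℝ => Real.exp (y ^ 2 / 2))
          (Real.exp (y ^ 2 / 2) * (2 * y ^ 1 / 2)) y :=
        ((hasDerivAt_pow 2 y).div_const 2).exp
      have h1 := (hvd y).hasDerivAt.mul he
      have h2 : deriv v y * Real.exp (y ^ 2 / 2) +
          v y * (Real.exp (y ^ 2 / 2) * (2 * y ^ 1 / 2)) = 0 := by
        have := hg0 y
        simp only [hg_def] at this
        have : deriv v y = - (y * v y) := by linarith
        rw [this]; ring
      rw [h2] at h1; exact h1
    have hwconst : ∀ a b : ℝ, w a = w b := by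
      intro a b
      exact is_const_of_deriv_eq_zero (fun y => (hwderiv y).differentiableAt)
        (fun y => (hwderiv y).deriv) a b
    obtain ⟨R, hR⟩ : ∃ R : ℝ, R ∉ tsupport v := by
      by_contra h
      push_neg at h
      have : tsupport v = univ := eq_univ_of_forall h
      exact (IsCompact.ne_univ hsupp) this
    have hvR : v R = 0 := image_eq_zero_of_notMem_tsupport hR
    apply hne
    funext y
    have := hwconst y R
    simp only [hw_def, hvR, zero_mul] at this
    have hexp : Real.exp (y ^ 2 / 2) ≠ 0 := Real.exp_ne_zero _
    exact (mul_eq_zero.mp this).resolve_right hexp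
  have hGpos : 0 < ∫ y : ℝ, g y ^ 2 := lt_of_le_of_ne hGnonneg (Ne.symm hGne)
  linarith [hGval ▸ hGpos]
end

section
/- Let μ > 1 and R > 0, and let v : [0, R] → ℝ be twice continuously differentiable with v″(y) = (y² − μ) v(y) for all y ∈ [0, R], v(0) = 1, v′(0) = 0, and v(y) > 0 for all y ∈ [0, R). Then v(y) ≤ e^{−y²/2} for all y ∈ [0, R], with strict inequality v(y) < e^{−y²/2} for all y ∈ (0, R]. (Thus the Dirichlet eigenfunction of −v″ + y²v on the interval stays below the whole-line ground state w(y) = e^{−y²/2}, which satisfies w″ = (y² − 1)w, w(0) = 1, w′(0) = 0.) -/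
open MeasureTheory Set

/-- Comparison of the Dirichlet eigenfunction of `-v'' + y² v` (with eigenvalue `μ > 1`,
normalized by `v 0 = 1`, `v' 0 = 0`, positive on `[0, R)`) with the whole-line ground
state `e^{-y²/2}`: the eigenfunction stays below the ground state, strictly on `(0, R]`. -/
theorem oneD_eigenfunction_below_ground_state
    (μ R : ℝ) (hμ : 1 < μ) (hR : 0 < R) (v v' : ℝ → ℝ)
    (hd1 : ∀ y ∈ Icc (0:ℝ) R, HasDerivAt v (v' y) y)
    (hd2 : ∀ y ∈ Icc (0:ℝ) R, HasDerivAt v' ((y ^ 2 - μ) * v y) y)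
    (h0 : v 0 = 1) (h0' : v' 0 = 0)
    (hpos : ∀ y ∈ Ico (0:ℝ) R, 0 < v y) :
    (∀ y ∈ Icc (0:ℝ) R, v y ≤ Real.exp (-y ^ 2 / 2)) ∧
      (∀ y ∈ Ioc (0:ℝ) R, v y < Real.exp (-y ^ 2 / 2)) := by
  set f : ℝ → ℝ := fun y => (v' y + y * v y) * Real.exp (-y ^ 2 / 2) with hf_def
  set g : ℝ → ℝ := fun y => v y * Real.exp (y ^ 2 / 2) with hg_def
  -- derivative of f
  have hE : ∀ y : ℝ, HasDerivAt (fun y : ℝ => Real.exp (-y ^ 2 / 2))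
      (Real.exp (-y ^ 2 / 2) * (-y)) y := by
    intro y
    have h1 : HasDerivAt (fun y : ℝ => -y ^ 2 / 2) (-(2 * y ^ 1) / 2) y :=
      ((hasDerivAt_pow 2 y).neg).div_const 2
    have := h1.exp
    convert this using 1 <;> ring_nf
  have hE2 : ∀ y : ℝ, HasDerivAt (fun y : ℝ => Real.exp (y ^ 2 / 2))
      (Real.exp (y ^ 2 / 2) * y) y := by
    intro y
    have h1 : HasDerivAt (fun y : ℝ => y ^ 2 / 2) ((2 * y ^ 1) / 2) y :=
      (hasDerivAt_pow 2 y).div_const 2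
    have := h1.exp
    convert this using 1 <;> ring_nf
  have hf : ∀ y ∈ Icc (0:ℝ) R,
      HasDerivAt f ((1 - μ) * v y * Real.exp (-y ^ 2 / 2)) y := by
    intro y hy
    have h1 : HasDerivAt (fun y => v' y + y * v y)
        ((y ^ 2 - μ) * v y + (1 * v y + y * v' y)) y :=
      (hd2 y hy).add ((hasDerivAt_id y).mul (hd1 y hy))
    have : HasDerivAt (fun y => (v' y + y * v y) * Real.exp (-y ^ 2 / 2)) _ y := h1.mul (hE y)
    convert this using 1
    ring
  have hg : ∀ y ∈ Icc (0:ℝ) R,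
      HasDerivAt g ((v' y + y * v y) * Real.exp (y ^ 2 / 2)) y := by
    intro y hy
    have : HasDerivAt (fun y => v y * Real.exp (y ^ 2 / 2)) _ y := (hd1 y hy).mul (hE2 y)
    convert this using 1
    ring
  have hfc : ContinuousOn f (Icc 0 R) := fun y hy => ((hf y hy).continuousAt).continuousWithinAt
  have hgc : ContinuousOn g (Icc 0 R) := fun y hy => ((hg y hy).continuousAt).continuousWithinAt
  have hint : interior (Icc (0:ℝ) R) = Ioo 0 R := interior_Icc
  -- f strictly decreasing
  have hfanti : StrictAntiOn f (Icc 0 R) := by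
    apply StrictAntiOn.mono (s := Icc 0 R) ?_ le_rfl
    apply strictAntiOn_of_deriv_neg (convex_Icc 0 R) hfc
    intro x hx
    rw [hint] at hx
    rw [(hf x (Ioo_subset_Icc_self hx)).deriv]
    have hv : 0 < v x := hpos x ⟨le_of_lt hx.1, hx.2⟩
    have hEp := Real.exp_pos (-x ^ 2 / 2)
    nlinarith [mul_pos (mul_pos (sub_pos.2 hμ) hv) hEp]
  have hf0 : f 0 = 0 := by simp [hf_def, h0', h0]
  have hfneg : ∀ y ∈ Ioc (0:ℝ) R, f y < 0 := by
    intro y hy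
    have := hfanti (left_mem_Icc.2 hR.le) ⟨hy.1.le, hy.2⟩ hy.1
    linarith [this, hf0.symm ▸ this]
  -- g strictly decreasing
  have hganti : StrictAntiOn g (Icc 0 R) := by
    apply strictAntiOn_of_deriv_neg (convex_Icc 0 R) hgc
    intro x hx
    rw [hint] at hx
    rw [(hg x (Ioo_subset_Icc_self hx)).deriv]
    have hfx : f x < 0 := hfneg x ⟨hx.1, hx.2.le⟩
    have hE1 := Real.exp_pos (-x ^ 2 / 2)
    have hE2' := Real.exp_pos (x ^ 2 / 2)
    have hsum : v' x + x * v x < 0 := by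
      by_contra h
      push_neg at h
      have : 0 ≤ f x := mul_nonneg h hE1.le
      linarith
    exact mul_neg_of_neg_of_pos hsum hE2'
  have hg0 : g 0 = 1 := by simp [hg_def, h0]
  have key : ∀ y ∈ Ioc (0:ℝ) R, v y < Real.exp (-y ^ 2 / 2) := by
    intro y hy
    have hgy : g y < 1 := by
      have := hganti (left_mem_Icc.2 hR.le) ⟨hy.1.le, hy.2⟩ hy.1
      rwa [hg0] at this
    have hprod : Real.exp (-y ^ 2 / 2) * Real.exp (y ^ 2 / 2) = 1 := by
      rw [← Real.exp_add, show -y ^ 2 / 2 + y ^ 2 / 2 = 0 by ring, Real.exp_zero]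
    have hE2' := Real.exp_pos (y ^ 2 / 2)
    have : v y * Real.exp (y ^ 2 / 2) < Real.exp (-y ^ 2 / 2) * Real.exp (y ^ 2 / 2) := by
      rw [hprod]; exact hgy
    exact lt_of_mul_lt_mul_right this hE2'.le
  refine ⟨fun y hy => ?_, key⟩
  rcases eq_or_lt_of_le hy.1 with h | h
  · rw [← h]; simp [h0]
  · exact (key y ⟨h, hy.2⟩).le
end
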